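/- arXiv:1710.03026 — 3 statements merged into one kernel-verified Lean document; each statement's English description precedes it below -/
import Mathlib

section
/- Let ℓ ≥ 2 and let (s_n) be a binary sequence whose generating function over F_2 satisfies f_2(G(x)^{2^ℓ}) + x·f_1(G(x)²) + G(x) + f_0(x) = 0 with polynomials f_0, f_1, f_2 over F_2 and deg f_0 ≤ 2^ℓ − 3. Then the well-distribution measure satisfies W(s_n, N) ≥ ⌊(N+1)/2^ℓ⌋. -/
/-!
Reading the functional equation as `G = f₂(G^{2^ℓ}) + X·f₁(G²) + f₀(X)` (characteristic 2),
the first summand is supported on multiples of `2^ℓ` and the second on odd exponents, both by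
the Frobenius; so for `n ≡ -2 (mod 2^ℓ)` beyond `deg f₀` the coefficient `s n` vanishes. The
progression `2^ℓ - 2, 2·2^ℓ - 2, …` thus carries only `+1`'s, and its first `⌊(N+1)/2^ℓ⌋`
terms lie below `N`.
-/

/-- The `N`th well-distribution measure of a binary sequence. -/
noncomputable def Wmeasure (s : ℕ → ZMod 2) (N : ℕ) : ℤ :=
  sSup {x : ℤ | ∃ a b t : ℕ, 1 ≤ b ∧ 1 ≤ t ∧ a + (t - 1) * b < N ∧
    x = |∑ j ∈ Finset.range t, (-1 : ℤ) ^ (s (a + j * b)).val|}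

namespace PowerSeries

theorem coeff_pow_expChar_pow_of_not_dvd {R : Type*} [CommRing R] (p : ℕ) [ExpChar R p]
    (φ : PowerSeries R) {k n : ℕ} (h : ¬ p ^ k ∣ n) : coeff n (φ ^ p ^ k) = 0 := by
  have hp : p ≠ 0 := expChar_ne_zero R p
  rw [← MvPowerSeries.map_iterateFrobenius_expand p hp φ k]
  change iterateFrobenius R p k (coeff n (expand (p ^ k) (pow_ne_zero k hp) φ)) = 0
  rw [coeff_expand_of_not_dvd _ _ _ h, map_zero]

theorem aeval_X_eq_coe {R : Type*} [CommRing R] (f : Polynomial R) :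
    Polynomial.aeval (X : PowerSeries R) f = f := by
  simpa using Polynomial.aeval_algHom_apply (Polynomial.coeToPowerSeries.algHom R) Polynomial.X f

end PowerSeries

theorem Polynomial.aeval_pow_char_pow {p : ℕ} [Fact p.Prime] {A : Type*} [CommRing A]
    [Algebra (ZMod p) A] (x : A) (f : Polynomial (ZMod p)) (k : ℕ) :
    aeval (x ^ p ^ k) f = aeval x f ^ p ^ k := by
  induction k with
  | zero => simp
  | succ k ih => rw [pow_succ, pow_mul, ← expand_aeval, ZMod.expand_card, map_pow, ih, pow_mul]

open PowerSeries in
theorem coeff_eq_zero_of_functional_equation {p ℓ n : ℕ} [Fact p.Prime] {G : PowerSeries (ZMod p)}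
    {f₀ f₁ f₂ : Polynomial (ZMod p)}
    (heq : Polynomial.aeval (G ^ p ^ ℓ) f₂ + X * Polynomial.aeval (G ^ p) f₁ + G
      + Polynomial.aeval (X : PowerSeries (ZMod p)) f₀ = 0)
    (hdvd : p ∣ n) (hndvd : ¬ p ^ ℓ ∣ n) (hdeg : f₀.natDegree < n) : coeff n G = 0 := by
  have h₂ : coeff n (Polynomial.aeval (G ^ p ^ ℓ) f₂) = 0 := by
    rw [Polynomial.aeval_pow_char_pow]
    exact coeff_pow_expChar_pow_of_not_dvd p (Polynomial.aeval G f₂) hndvd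
  have h₁ : coeff n (X * Polynomial.aeval (G ^ p) f₁) = 0 := by
    obtain _ | m := n
    · exact coeff_zero_X_mul _
    have hm : ¬ p ^ 1 ∣ m := by
      rw [pow_one]
      exact fun h => (Fact.out : p.Prime).not_dvd_one ((Nat.dvd_add_right h).mp hdvd)
    have h := coeff_pow_expChar_pow_of_not_dvd p (Polynomial.aeval G f₁) hm
    rw [← Polynomial.aeval_pow_char_pow, pow_one] at h
    rwa [coeff_succ_X_mul]
  have h₀ : coeff n (Polynomial.aeval (X : PowerSeries (ZMod p)) f₀) = 0 := by
    rw [aeval_X_eq_coe, Polynomial.coeff_coe, Polynomial.coeff_eq_zero_of_natDegree_lt hdeg]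
  simpa [h₀, h₁, h₂] using congrArg (coeff n) heq

theorem coeff_two_pow_sub_two_add_mul_eq_zero {ℓ : ℕ} (hℓ : 2 ≤ ℓ) {G : PowerSeries (ZMod 2)}
    {f₀ f₁ f₂ : Polynomial (ZMod 2)} (hdeg : f₀.natDegree ≤ 2 ^ ℓ - 3)
    (heq : Polynomial.aeval (G ^ 2 ^ ℓ) f₂ + PowerSeries.X * Polynomial.aeval (G ^ 2) f₁ + G
      + Polynomial.aeval (PowerSeries.X : PowerSeries (ZMod 2)) f₀ = 0) (j : ℕ) :
    PowerSeries.coeff (2 ^ ℓ - 2 + j * 2 ^ ℓ) G = 0 := by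
  have h4 : 2 ^ 2 ≤ 2 ^ ℓ := Nat.pow_le_pow_right two_pos hℓ
  have h2 : 2 ∣ 2 ^ ℓ := dvd_pow_self 2 (by omega)
  have hmod : (2 ^ ℓ - 2 + j * 2 ^ ℓ) % 2 ^ ℓ = 2 ^ ℓ - 2 := by
    rw [Nat.add_mul_mod_self_right, Nat.mod_eq_of_lt (by omega)]
  refine coeff_eq_zero_of_functional_equation heq
    ((Nat.dvd_sub h2 dvd_rfl).add (h2.mul_left j)) ?_ (by omega)
  rw [Nat.dvd_iff_mod_eq_zero, hmod]
  omega

theorem sub_two_add_pred_div_mul_lt {N q : ℕ} (hq : 2 ≤ q) (ht : 0 < (N + 1) / q) :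
    q - 2 + ((N + 1) / q - 1) * q < N := by
  have : (N + 1) / q * q ≤ N + 1 := Nat.div_mul_le_self _ _
  have : q ≤ (N + 1) / q * q := Nat.le_mul_of_pos_left _ ht
  rw [Nat.sub_one_mul]
  omega

theorem abs_sum_le_Wmeasure (s : ℕ → ZMod 2) {N a b t : ℕ} (hb : 1 ≤ b) (ht : 1 ≤ t)
    (h : a + (t - 1) * b < N) :
    |∑ j ∈ Finset.range t, (-1 : ℤ) ^ (s (a + j * b)).val| ≤ Wmeasure s N := by
  refine le_csSup ⟨N, ?_⟩ ⟨a, b, t, hb, ht, h, rfl⟩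
  rintro _ ⟨a', b', t', hb', -, h', rfl⟩
  have ht' : t' ≤ N := by
    have := Nat.le_mul_of_pos_right (t' - 1) hb'
    omega
  calc |∑ j ∈ Finset.range t', (-1 : ℤ) ^ (s (a' + j * b')).val|
      ≤ ∑ j ∈ Finset.range t', |(-1 : ℤ) ^ (s (a' + j * b')).val| := Finset.abs_sum_le_sum_abs _ _
    _ = t' := by simp
    _ ≤ N := by exact_mod_cast ht'

theorem Wmeasure_nonneg (s : ℕ → ZMod 2) (N : ℕ) : 0 ≤ Wmeasure s N := by
  cases N with
  | zero => simp [Wmeasure]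
  | succ N => exact (abs_nonneg _).trans (abs_sum_le_Wmeasure s (a := 0) le_rfl le_rfl (by omega))

/-- If `G = ∑ s_n x^n ∈ F₂[[x]]` satisfies `f₂(G^{2^ℓ}) + x·f₁(G²) + G + f₀(x) = 0`
with `deg f₀ ≤ 2^ℓ - 3` and `ℓ ≥ 2`, then `W(s, N) ≥ ⌊(N+1)/2^ℓ⌋`. -/
theorem well_distribution_of_functional_equation (ℓ : ℕ) (hℓ : 2 ≤ ℓ) (s : ℕ → ZMod 2)
    (f₀ f₁ f₂ : Polynomial (ZMod 2)) (hdeg : f₀.natDegree ≤ 2 ^ ℓ - 3)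
    (heq : Polynomial.aeval ((PowerSeries.mk s) ^ (2 ^ ℓ)) f₂
      + PowerSeries.X * Polynomial.aeval ((PowerSeries.mk s) ^ 2) f₁
      + PowerSeries.mk s
      + Polynomial.aeval (PowerSeries.X : PowerSeries (ZMod 2)) f₀ = 0) :
    ∀ N : ℕ, (((N + 1) / 2 ^ ℓ : ℕ) : ℤ) ≤ Wmeasure s N := by
  intro N
  obtain ht | ht := Nat.eq_zero_or_pos ((N + 1) / 2 ^ ℓ)
  · rw [ht, Nat.cast_zero]
    exact Wmeasure_nonneg s N
  have hvan (j : ℕ) : s (2 ^ ℓ - 2 + j * 2 ^ ℓ) = 0 := by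
    simpa using coeff_two_pow_sub_two_add_mul_eq_zero hℓ hdeg heq j
  have hq : 2 ≤ 2 ^ ℓ := Nat.le_self_pow (by omega) 2
  calc (((N + 1) / 2 ^ ℓ : ℕ) : ℤ)
      = |∑ j ∈ Finset.range ((N + 1) / 2 ^ ℓ), (-1 : ℤ) ^ (s (2 ^ ℓ - 2 + j * 2 ^ ℓ)).val| := by
        simp only [hvan, ZMod.val_zero, pow_zero, Finset.sum_const, Finset.card_range,
          nsmul_eq_mul, mul_one, Nat.abs_cast]
    _ ≤ Wmeasure s N :=
        abs_sum_le_Wmeasure s (by omega) ht (sub_two_add_pred_div_mul_lt hq ht)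
end

section
/- Let (t_n) be the Thue–Morse sequence over F_2 (t_0 = 0, t_{2n} = t_n, t_{2n+1} = t_n + 1). Then C_2(t_n, N) > N/4 − 2 for all N ≥ 8. -/
/-!
The signs `f n = (-1)^(t n + t (n+1))` of the lag-one correlation satisfy `f (2k) = -1` and
`f (2k+1) = -f k`, so their partial sums obey `S (2K) = -K - S K`. By the triangle inequality
`|S K| + |S (2K)| ≥ K`, hence one of these two correlation sums (with `d₁ = 0`, `d₂ = 1`) has
absolute value at least `K / 2`; `K = ⌊(N-2)/2⌋` is the largest choice keeping both windows
inside `[0, N)`.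
-/

/-- The `N`th correlation measure of order 2 of a binary sequence. -/
noncomputable def C2 (s : ℕ → ZMod 2) (N : ℕ) : ℤ :=
  sSup {x : ℤ | ∃ M d₁ d₂ : ℕ, d₁ < d₂ ∧ d₂ + M < N ∧
    x = |∑ n ∈ Finset.range M, (-1 : ℤ) ^ ((s (n + d₁)).val + (s (n + d₂)).val)|}

open Finset

theorem abs_sum_neg_one_pow_le (M : ℕ) (e : ℕ → ℕ) :
    |∑ n ∈ range M, (-1 : ℤ) ^ e n| ≤ M :=
  calc |∑ n ∈ range M, (-1 : ℤ) ^ e n| ≤ ∑ n ∈ range M, |(-1 : ℤ) ^ e n| :=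
        abs_sum_le_sum_abs _ _
    _ = M := by simp

theorem abs_correlation_le_C2 (s : ℕ → ZMod 2) {N M d₁ d₂ : ℕ} (hd : d₁ < d₂)
    (hN : d₂ + M < N) :
    |∑ n ∈ range M, (-1 : ℤ) ^ ((s (n + d₁)).val + (s (n + d₂)).val)| ≤ C2 s N := by
  refine le_csSup ⟨N, ?_⟩ ⟨M, d₁, d₂, hd, hN, rfl⟩
  rintro x ⟨M', d₁', d₂', -, hN', rfl⟩
  exact (abs_sum_neg_one_pow_le M' _).trans (by omega)

theorem ZMod.neg_one_pow_val_add_val_add_one (a : ZMod 2) :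
    (-1 : ℤ) ^ (a.val + (a + 1).val) = -1 := by
  revert a; decide

theorem ZMod.neg_one_pow_val_add_one_add_val (a b : ZMod 2) :
    (-1 : ℤ) ^ ((a + 1).val + b.val) = -(-1 : ℤ) ^ (a.val + b.val) := by
  revert a b; decide

def adjSign (t : ℕ → ZMod 2) (n : ℕ) : ℤ := (-1 : ℤ) ^ ((t n).val + (t (n + 1)).val)

def adjSum (t : ℕ → ZMod 2) (M : ℕ) : ℤ := ∑ n ∈ range M, adjSign t n

theorem abs_adjSum_le_C2 (t : ℕ → ZMod 2) {N M : ℕ} (hM : M + 1 < N) :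
    |adjSum t M| ≤ C2 t N := by
  simpa [adjSum, adjSign] using
    abs_correlation_le_C2 t (d₁ := 0) (d₂ := 1) zero_lt_one (by omega)

section ThueMorse

variable {t : ℕ → ZMod 2} (hte : ∀ n : ℕ, t (2 * n) = t n)
  (hto : ∀ n : ℕ, t (2 * n + 1) = t n + 1)
include hte hto

theorem adjSign_two_mul (k : ℕ) : adjSign t (2 * k) = -1 := by
  rw [adjSign, hto, hte, ZMod.neg_one_pow_val_add_val_add_one]

theorem adjSign_two_mul_add_one (k : ℕ) : adjSign t (2 * k + 1) = -adjSign t k := by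
  rw [adjSign, adjSign, show 2 * k + 1 + 1 = 2 * (k + 1) by ring, hto, hte,
    ZMod.neg_one_pow_val_add_one_add_val]

theorem adjSum_two_mul (K : ℕ) : adjSum t (2 * K) = -K - adjSum t K := by
  induction K with
  | zero => simp [adjSum]
  | succ K ih =>
    simp only [adjSum] at ih ⊢
    rw [show 2 * (K + 1) = 2 * K + 1 + 1 by ring, sum_range_succ, sum_range_succ, ih,
      adjSign_two_mul hte hto, adjSign_two_mul_add_one hte hto, sum_range_succ]
    push_cast
    ring

theorem le_abs_adjSum_add_abs_adjSum_two_mul (K : ℕ) :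
    (K : ℤ) ≤ |adjSum t K| + |adjSum t (2 * K)| :=
  calc (K : ℤ) = |adjSum t K + adjSum t (2 * K)| := by
        rw [adjSum_two_mul hte hto, add_sub_cancel, abs_neg, Nat.abs_cast]
    _ ≤ |adjSum t K| + |adjSum t (2 * K)| := abs_add_le _ _

end ThueMorse

theorem thue_morse_correlation_general (t : ℕ → ZMod 2)
    (hte : ∀ n : ℕ, t (2 * n) = t n) (hto : ∀ n : ℕ, t (2 * n + 1) = t n + 1) :
    ∀ N : ℕ, 8 ≤ N → (N : ℚ) / 4 - 2 < (C2 t N : ℚ) := by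
  intro N hN
  set K := (N - 2) / 2
  have hK := le_abs_adjSum_add_abs_adjSum_two_mul hte hto K
  have h₁ : |adjSum t K| ≤ C2 t N := abs_adjSum_le_C2 t (by omega)
  have h₂ : |adjSum t (2 * K)| ≤ C2 t N := abs_adjSum_le_C2 t (by omega)
  have hNK : (N : ℤ) ≤ 2 * K + 3 := by omega
  have hC : (N : ℤ) < 4 * C2 t N + 8 := by linarith
  qify at hC
  linarith

/-- The Thue–Morse sequence satisfies `C₂(t,N) > N/4 - 2` for `N ≥ 8`. -/
theorem thue_morse_correlation (t : ℕ → ZMod 2) (ht0 : t 0 = 0)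
    (hte : ∀ n : ℕ, t (2 * n) = t n) (hto : ∀ n : ℕ, t (2 * n + 1) = t n + 1) :
    ∀ N : ℕ, 8 ≤ N → (N : ℚ) / 4 - 2 < (C2 t N : ℚ) :=
  thue_morse_correlation_general t hte hto
end

section
/- Let (v_n) be the regular paperfolding sequence over F_2: if n = m·2^k with m odd then v_n = 1 if m ≡ 1 (mod 4) and v_n = 0 if m ≡ 3 (mod 4), and v_0 arbitrary. Then C_2(v_n, N) > N/6 − 2 for all N ≥ 12. -/
def corrSum (s : ℕ → ZMod 2) (M d₁ d₂ : ℕ) : ℤ :=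
  ∑ n ∈ Finset.range M, (-1 : ℤ) ^ ((s (n + d₁)).val + (s (n + d₂)).val)

section Correlation

variable (s : ℕ → ZMod 2)

lemma abs_corrSum_le (M d₁ d₂ : ℕ) : |corrSum s M d₁ d₂| ≤ M :=
  calc |corrSum s M d₁ d₂|
      ≤ ∑ n ∈ Finset.range M, |(-1 : ℤ) ^ ((s (n + d₁)).val + (s (n + d₂)).val)| :=
        Finset.abs_sum_le_sum_abs _ _
    _ = M := by simp

lemma abs_corrSum_le_C2 {N M d₁ d₂ : ℕ} (hd : d₁ < d₂) (hN : d₂ + M < N) :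
    |corrSum s M d₁ d₂| ≤ C2 s N := by
  refine le_csSup ⟨N, ?_⟩ ⟨M, d₁, d₂, hd, hN, rfl⟩
  rintro x ⟨M', d₁', d₂', -, hN', rfl⟩
  exact (abs_corrSum_le s M' d₁' d₂').trans (by omega)

lemma sum_range_ite_mod_four_eq_three (M : ℕ) :
    ∑ n ∈ Finset.range M, (if n % 4 = 3 then (-1 : ℤ) else 1) = M - 2 * (M / 4 : ℕ) := by
  induction M with
  | zero => simp
  | succ M ih =>
    rw [Finset.sum_range_succ, ih]
    by_cases h : M % 4 = 3 <;> simp [h] <;> omega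

lemma neg_one_le_neg_one_pow (k : ℕ) : -1 ≤ (-1 : ℤ) ^ k := by
  rcases neg_one_pow_eq_or ℤ k with h | h <;> simp [h]

lemma le_two_mul_corrSum {d₁ d₂ : ℕ} (h : ∀ n, n % 4 ≠ 3 → s (n + d₁) = s (n + d₂)) (M : ℕ) :
    (M : ℤ) ≤ 2 * corrSum s M d₁ d₂ := by
  have hterm (n : ℕ) : (if n % 4 = 3 then (-1 : ℤ) else 1) ≤
      (-1 : ℤ) ^ ((s (n + d₁)).val + (s (n + d₂)).val) := by
    split_ifs with hn
    · exact neg_one_le_neg_one_pow _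
    · rw [h n hn, ← two_mul, pow_mul]
      simp
  have hsum : (M : ℤ) - 2 * (M / 4 : ℕ) ≤ corrSum s M d₁ d₂ :=
    sum_range_ite_mod_four_eq_three M ▸ Finset.sum_le_sum fun n _ => hterm n
  omega

end Correlation

section Paperfolding

variable {v : ℕ → ZMod 2} (hv1 : ∀ m k : ℕ, m % 4 = 1 → v (m * 2 ^ k) = 1)
  (hv3 : ∀ m k : ℕ, m % 4 = 3 → v (m * 2 ^ k) = 0)
include hv1 hv3

lemma paperfolding_eq_of_mod_four_eq {m m' : ℕ} (hm : m % 2 = 1) (h : m % 4 = m' % 4) (k : ℕ) :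
    v (m * 2 ^ k) = v (m' * 2 ^ k) := by
  rcases Nat.odd_mod_four_iff.mp hm with h1 | h3
  · rw [hv1 m k h1, hv1 m' k (h ▸ h1)]
  · rw [hv3 m k h3, hv3 m' k (h ▸ h3)]

lemma paperfolding_add_eight {m : ℕ} (hm : m % 4 ≠ 0) : v (m + 8) = v m := by
  rcases Nat.even_or_odd m with ⟨t, rfl⟩ | hodd
  · have ht : t % 2 = 1 := by omega
    have h := paperfolding_eq_of_mod_four_eq hv1 hv3 (m' := t + 4) ht (by omega) 1
    rw [show t + t + 8 = (t + 4) * 2 ^ 1 by ring, show t + t = t * 2 ^ 1 by ring, h]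
  · simpa using
      (paperfolding_eq_of_mod_four_eq hv1 hv3 (Nat.odd_iff.mp hodd) (m' := m + 8) (by omega) 0).symm

end Paperfolding

/-- The regular paperfolding sequence (`v (m·2^k) = 1` if `m ≡ 1 (mod 4)`,
`v (m·2^k) = 0` if `m ≡ 3 (mod 4)`, for odd `m`; `v 0` arbitrary) satisfies
`C₂(v,N) > N/6 - 2` for `N ≥ 12`. -/
theorem paperfolding_correlation (v : ℕ → ZMod 2)
    (hv1 : ∀ m k : ℕ, m % 4 = 1 → v (m * 2 ^ k) = 1)
    (hv3 : ∀ m k : ℕ, m % 4 = 3 → v (m * 2 ^ k) = 0) :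
    ∀ N : ℕ, 12 ≤ N → (N : ℚ) / 6 - 2 < (C2 v N : ℚ) := by
  intro N hN
  have hlag : ∀ n, n % 4 ≠ 3 → v (n + 1) = v (n + 9) := fun n hn =>
    (paperfolding_add_eight hv1 hv3 (m := n + 1) (by omega)).symm
  have hsum := le_two_mul_corrSum v hlag (N - 10)
  have hC2 := abs_corrSum_le_C2 v (N := N) (M := N - 10) (d₁ := 1) (d₂ := 9) (by omega) (by omega)
  have hint : (N : ℤ) - 10 ≤ 2 * C2 v N := by
    have := le_abs_self (corrSum v (N - 10) 1 9)
    omega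
  have hrat : (N : ℚ) - 10 ≤ 2 * C2 v N := by exact_mod_cast hint
  have hNq : (12 : ℚ) ≤ N := by exact_mod_cast hN
  linarith
end
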